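/- arXiv:1411.0944 — 3 statements merged into one kernel-verified Lean document; each statement's English description precedes it below -/
import Mathlib

section
/- Let v be a uniform complete simple game on N = {1,…,n}. Then the raw Public Good index satisfies the dominance property on v: for all players i, j with i ⊒ j one has PGI^r_i(v) ≥ PGI^r_j(v), i.e., |M_i| ≥ |M_j|. -/
open scoped Classical

/-- A simple game on the player set `{1,…,n}` (modeled as `Fin n`):
a monotone map from coalitions to `{0,1}` (modeled as `Bool`) that is
`0` on the empty coalition and `1` on the grand coalition. -/
structure SimpleGame (n : ℕ) where
  win : Finset (Fin n) → Bool
  win_empty : win ∅ = false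
  win_univ : win Finset.univ = true
  win_mono : ∀ ⦃S T : Finset (Fin n)⦄, S ⊆ T → win S = true → win T = true

namespace SimpleGame

variable {n : ℕ}

/-- Player `i` dominates player `j`: `v((S ∪ {i}) \ {j}) ≥ v(S)` for every
coalition `S` with `j ∈ S` and `i ∉ S`. -/
def Dominates (v : SimpleGame n) (i j : Fin n) : Prop :=
  ∀ S : Finset (Fin n), j ∈ S → i ∉ S → v.win S ≤ v.win ((S ∪ {i}) \ {j})

/-- The game is complete if the dominance relation is a total preorder. -/
def IsComplete (v : SimpleGame n) : Prop :=
  (∀ i, v.Dominates i i) ∧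
  (∀ i j, v.Dominates i j ∨ v.Dominates j i) ∧
  (∀ i j k, v.Dominates i j → v.Dominates j k → v.Dominates i k)

/-- `S` is a minimal winning coalition: winning and every proper subset is losing. -/
def IsMWC (v : SimpleGame n) (S : Finset (Fin n)) : Prop :=
  v.win S = true ∧ ∀ T ⊂ S, v.win T = false

/-- `M_i`: the set of minimal winning coalitions containing player `i`. -/
noncomputable def Mset (v : SimpleGame n) (i : Fin n) : Finset (Finset (Fin n)) :=
  Finset.univ.filter fun S => v.IsMWC S ∧ i ∈ S

/-- `M_i(l)`: minimal winning coalitions of cardinality `l` containing `i`. -/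
noncomputable def Mlset (v : SimpleGame n) (i : Fin n) (l : ℕ) : Finset (Finset (Fin n)) :=
  (v.Mset i).filter fun S => S.card = l

/-- Raw Public Good index: `PGI^r_i(v) = |M_i|`. -/
noncomputable def PGI (v : SimpleGame n) (i : Fin n) : ℕ := (v.Mset i).card

/-- Raw Deegan-Packel index: `DP^r_i(v) = Σ_{S ∈ M_i} 1/|S|`. -/
noncomputable def DP (v : SimpleGame n) (i : Fin n) : ℝ :=
  ∑ S ∈ v.Mset i, (1 : ℝ) / (S.card : ℝ)

/-- The game is uniform if all minimal winning coalitions have the same cardinality. -/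
def IsUniform (v : SimpleGame n) : Prop :=
  ∀ S T, v.IsMWC S → v.IsMWC T → S.card = T.card

/-- `[q; w]` is a weighted representation of `v`. -/
def IsWeightedRep (v : SimpleGame n) (q : ℝ) (w : Fin n → ℝ) : Prop :=
  0 < q ∧ (∀ i, 0 ≤ w i) ∧ ∀ S : Finset (Fin n), v.win S = true ↔ q ≤ ∑ i ∈ S, w i

/-- The game is weighted. -/
def IsWeighted (v : SimpleGame n) : Prop := ∃ q w, v.IsWeightedRep q w

/-- `D_i`: coalitions decisive for player `i`. -/
noncomputable def Dset (v : SimpleGame n) (i : Fin n) : Finset (Finset (Fin n)) :=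
  Finset.univ.filter fun S => i ∈ S ∧ v.win S = true ∧ v.win (S.erase i) = false

/-- Raw Banzhaf index: `Bz^r_i(v) = |D_i|`. -/
noncomputable def Bz (v : SimpleGame n) (i : Fin n) : ℕ := (v.Dset i).card

/-- `S` is a shift-minimal winning coalition. -/
def IsSMWC (v : SimpleGame n) (S : Finset (Fin n)) : Prop :=
  v.IsMWC S ∧ ∀ i ∈ S, ∀ j ∉ S, v.Dominates i j → ¬ v.Dominates j i →
    v.win ((S \ {i}) ∪ {j}) = false

/-- `𝒮_i`: the set of shift-minimal winning coalitions containing player `i`. -/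
noncomputable def Sset (v : SimpleGame n) (i : Fin n) : Finset (Finset (Fin n)) :=
  Finset.univ.filter fun S => v.IsSMWC S ∧ i ∈ S

/-- Raw Shift index: `S^r_i(v) = |𝒮_i|`. -/
noncomputable def ShiftIdx (v : SimpleGame n) (i : Fin n) : ℕ := (v.Sset i).card

/-- The number of players for which the coalition `S` is decisive. -/
noncomputable def numDecisive (v : SimpleGame n) (S : Finset (Fin n)) : ℕ :=
  (Finset.univ.filter fun k => k ∈ S ∧ v.win S = true ∧ v.win (S.erase k) = false).card

/-- Raw Johnston index: `Jo^r_i(v) = Σ_{S ∈ D_i} 1/#{decisive players of S}`. -/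
noncomputable def Jo (v : SimpleGame n) (i : Fin n) : ℝ :=
  ∑ S ∈ v.Dset i, (1 : ℝ) / (v.numDecisive S : ℝ)

/-- `i` is a null player: it belongs to no minimal winning coalition. -/
def IsNull (v : SimpleGame n) (i : Fin n) : Prop := ∀ S, v.IsMWC S → i ∉ S

end SimpleGame

/-- A power index: assigns to every `n`-player simple game a vector in `ℝ^n`. -/
abbrev PowerIndex : Type := ∀ n : ℕ, SimpleGame n → Fin n → ℝ

/-- A class of games (one set of games for every number of players). -/
abbrev GameClass : Type := ∀ n : ℕ, Set (SimpleGame n)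

/-- Convex combination `P^α = Σ_h α_h P^h` of power indices. -/
noncomputable def convexComb {r : ℕ} (α : Fin r → ℝ) (P : Fin r → PowerIndex) : PowerIndex :=
  fun n v i => ∑ h, α h * P h n v i

/-- `Q` satisfies local monotonicity on the `n`-player games of `𝔊`. -/
def LMon (𝔊 : GameClass) (n : ℕ) (Q : PowerIndex) : Prop :=
  ∀ v ∈ 𝔊 n, ∀ i j : Fin n, v.Dominates i j → Q n v j ≤ Q n v i

/-- The cost of local monotonicity `c_𝒫(n,𝔊)`. -/
noncomputable def costLM {r : ℕ} [NeZero r] (P : Fin r → PowerIndex) (n : ℕ)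
    (𝔊 : GameClass) : ℝ :=
  sInf {β : ℝ | β ∈ Set.Icc (0 : ℝ) 1 ∧
    ∀ α ∈ stdSimplex ℝ (Fin r), β ≤ α 0 → LMon 𝔊 n (convexComb α P)}

/-- The raw Banzhaf index as a power index. -/
noncomputable def BzPI : PowerIndex := fun _ v i => (v.Bz i : ℝ)

/-- The raw Public Good index as a power index. -/
noncomputable def PGIPI : PowerIndex := fun _ v i => (v.PGI i : ℝ)

/-- The raw Shift index as a power index. -/
noncomputable def ShiftPI : PowerIndex := fun _ v i => (v.ShiftIdx i : ℝ)

/-- The raw Johnston index as a power index. -/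
noncomputable def JoPI : PowerIndex := fun _ v i => v.Jo i

/-- The raw Deegan-Packel index as a power index. -/
noncomputable def DPPI : PowerIndex := fun _ v i => v.DP i

/-- `𝔚`: the class of weighted games. -/
def WeightedClass : GameClass := fun _ => {v | v.IsWeighted}

/-!
Replacing `j` by `i` in every minimal winning coalition that contains `j` but not `i` maps
`M_j` injectively into `M_i`: the new coalition wins because `i` dominates `j`, and it is
minimal because it has the same size as a minimal winning coalition and the game is uniform.
-/

namespace SimpleGame

variable {n : ℕ}

theorem exists_isMWC_subset (v : SimpleGame n) {S : Finset (Fin n)} (hS : v.win S = true) :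
    ∃ U ⊆ S, v.IsMWC U := by
  obtain ⟨U, hUS, hUwin, hUmin⟩ := exists_minimal_le_of_wellFoundedLT (v.win · = true) S hS
  refine ⟨U, hUS, hUwin, fun T hTU => ?_⟩
  by_contra hT
  exact hTU.not_ge (hUmin (by simpa using hT) hTU.le)

theorem IsUniform.isMWC_of_card_eq {v : SimpleGame n} (huni : v.IsUniform)
    {S T : Finset (Fin n)} (hS : v.IsMWC S) (hT : v.win T = true) (hcard : T.card = S.card) :
    v.IsMWC T := by
  obtain ⟨U, hUT, hU⟩ := v.exists_isMWC_subset hT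
  obtain rfl : U = T := Finset.eq_of_subset_of_card_le hUT (by rw [huni U S hU hS, hcard])
  exact hU

theorem Dominates.win_insert_erase {v : SimpleGame n} {i j : Fin n} (hdom : v.Dominates i j)
    {S : Finset (Fin n)} (hjS : j ∈ S) (hiS : i ∉ S) (hS : v.win S = true) :
    v.win ((insert i S).erase j) = true := by
  have h := hdom S hjS hiS
  rw [hS, Finset.union_comm, ← Finset.insert_eq, ← Finset.erase_eq] at h
  exact top_le_iff.mp h

section Shift

variable {α : Type*} [DecidableEq α]

def shift (i j : α) (S : Finset α) : Finset α :=
  if i ∈ S then S else (insert i S).erase j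

theorem shift_injOn (i j : α) : Set.InjOn (shift i j) {S | j ∈ S} := by
  intro S hjS S' hjS' h
  by_cases hiS : i ∈ S <;> by_cases hiS' : i ∈ S' <;>
    simp only [shift, hiS, hiS', if_true, if_false] at h
  · exact h
  · exact absurd (h ▸ hjS) (Finset.notMem_erase j _)
  · exact absurd (h ▸ hjS') (Finset.notMem_erase j _)
  · have h' : insert i S = insert i S' :=
      Finset.erase_injOn' j (Finset.mem_insert_of_mem hjS) (Finset.mem_insert_of_mem hjS') h
    exact Finset.insert_erase_invOn.2.injOn hiS hiS' h'

end Shift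

theorem mem_Mset {v : SimpleGame n} {i : Fin n} {S : Finset (Fin n)} :
    S ∈ v.Mset i ↔ v.IsMWC S ∧ i ∈ S := by
  simp [Mset]

theorem IsUniform.shift_mem_Mset {v : SimpleGame n} (huni : v.IsUniform) {i j : Fin n}
    (hdom : v.Dominates i j) {S : Finset (Fin n)} (hS : S ∈ v.Mset j) :
    shift i j S ∈ v.Mset i := by
  obtain ⟨hSmwc, hjS⟩ := mem_Mset.1 hS
  by_cases hiS : i ∈ S
  · simpa [shift, hiS] using mem_Mset.2 ⟨hSmwc, hiS⟩
  have hij : i ≠ j := fun h => hiS (h ▸ hjS)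
  have hcard : ((insert i S).erase j).card = S.card := by
    rw [Finset.card_erase_of_mem (Finset.mem_insert_of_mem hjS),
      Finset.card_insert_of_notMem hiS, Nat.add_sub_cancel]
  simp only [shift, hiS, if_false]
  exact mem_Mset.2 ⟨huni.isMWC_of_card_eq hSmwc (hdom.win_insert_erase hjS hiS hSmwc.1) hcard,
    Finset.mem_erase.2 ⟨hij, Finset.mem_insert_self i S⟩⟩

end SimpleGame

open SimpleGame in
theorem pgi_dominance_of_uniform_complete_general {n : ℕ} (v : SimpleGame n)
    (huni : v.IsUniform) (i j : Fin n)
    (hdom : v.Dominates i j) : v.PGI j ≤ v.PGI i :=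
  Finset.card_le_card_of_injOn (shift i j) (fun _ hS => huni.shift_mem_Mset hdom hS)
    ((shift_injOn i j).mono fun _ hS => (mem_Mset.1 hS).2)

/-- For a uniform complete simple game, the raw Public Good index
satisfies the dominance property. -/
theorem pgi_dominance_of_uniform_complete {n : ℕ} (v : SimpleGame n)
    (hcomp : v.IsComplete) (huni : v.IsUniform) (i j : Fin n)
    (hdom : v.Dominates i j) : v.PGI j ≤ v.PGI i :=
  pgi_dominance_of_uniform_complete_general v huni i j hdom
end

section
/- Let 𝒫 = (P^1,…,P^r) be a collection of power indices, defined on games with any number of players, such that P^1 satisfies local monotonicity and every P^h is invariant for nulls, and let 𝔊 be a class of weighted games closed under the addition of null players. Then c_𝒫(n,𝔊) ≤ c_𝒫(n+1,𝔊) for all positive integers n. -/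
open scoped Classical

/-- The game obtained from `v` by adding a null player (as the new last player):
a coalition wins iff its old players form a winning coalition of `v`. -/
def SimpleGame.extNull {n : ℕ} (v : SimpleGame n) : SimpleGame (n + 1) where
  win S := v.win (Finset.univ.filter fun i : Fin n => i.castSucc ∈ S)
  win_empty := by simpa using v.win_empty
  win_univ := by simpa using v.win_univ
  win_mono := by
    intro S T hST h
    refine v.win_mono (fun i hi => ?_) h
    simp only [Finset.mem_filter] at *
    exact ⟨hi.1, hST hi.2⟩

/-- `P` is invariant for nulls: the added null player gets power `0` and the
power of every other player is unchanged when a null player is deleted. -/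
def InvariantForNulls (P : PowerIndex) : Prop :=
  ∀ (n : ℕ) (v : SimpleGame n),
    P (n + 1) v.extNull (Fin.last n) = 0 ∧
    ∀ j : Fin n, P (n + 1) v.extNull j.castSucc = P n v j

/-!
Adding a null player (as the last player) to an `n`-player game keeps every dominance
relation among the old players and, by invariance for nulls, their power under every convex
combination `P^α`. Hence a weight `β` that forces local monotonicity on the `(n+1)`-player
games of `𝔊` forces it on the `n`-player games as well: the set whose infimum is
`c_𝒫(n+1,𝔊)` is contained in the one for `c_𝒫(n,𝔊)`. It is nonempty since `β = 1` only
admits `P^α = P^1`.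
-/

open Finset

theorem SimpleGame.Dominates.extNull {n : ℕ} {v : SimpleGame n} {i j : Fin n}
    (hij : v.Dominates i j) : v.extNull.Dominates i.castSucc j.castSucc := by
  intro S hjS hiS
  have hfilter : (univ.filter fun k : Fin n => k.castSucc ∈ (S ∪ {i.castSucc}) \ {j.castSucc})
      = ((univ.filter fun k : Fin n => k.castSucc ∈ S) ∪ {i}) \ {j} := by
    ext k
    simp only [mem_filter, mem_sdiff, mem_union, mem_singleton, mem_univ, true_and,
      Fin.castSucc_inj]
  change v.win _ ≤ v.win _
  rw [hfilter]
  exact hij _ (by simpa using hjS) (by simpa using hiS)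

theorem eq_single_of_mem_stdSimplex_of_one_le {ι : Type*} [Fintype ι] [DecidableEq ι]
    {α : ι → ℝ} (hα : α ∈ stdSimplex ℝ ι) {i : ι} (hi : 1 ≤ α i) : α = Pi.single i 1 := by
  have hαi : α i = 1 := le_antisymm (mem_Icc_of_mem_stdSimplex hα i).2 hi
  have hrest : ∑ j ∈ univ.erase i, α j = 0 := by
    linarith [add_sum_erase univ α (mem_univ i), hα.2]
  funext j
  by_cases hji : j = i
  · subst hji
    simp [hαi]
  · rw [Pi.single_eq_of_ne hji]
    exact (sum_eq_zero_iff_of_nonneg fun k _ => hα.1 k).1 hrest j (mem_erase.2 ⟨hji, mem_univ j⟩)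

theorem convexComb_single {r : ℕ} (P : Fin r → PowerIndex) (h : Fin r) :
    convexComb (Pi.single h 1) P = P h := by
  funext n v i
  simp [convexComb, Pi.single_apply]

theorem InvariantForNulls.convexComb {r : ℕ} {P : Fin r → PowerIndex}
    (hP : ∀ h, InvariantForNulls (P h)) (α : Fin r → ℝ) :
    InvariantForNulls (convexComb α P) := by
  intro n v
  refine ⟨?_, fun j => ?_⟩
  · simp [_root_.convexComb, (hP _ n v).1]
  · simp [_root_.convexComb, (hP _ n v).2 j]

theorem LMon.of_extNull {𝔊 : GameClass} {n : ℕ} {Q : PowerIndex}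
    (hclosed : ∀ v ∈ 𝔊 n, v.extNull ∈ 𝔊 (n + 1))
    (hQ : ∀ (v : SimpleGame n) (j : Fin n), Q (n + 1) v.extNull j.castSucc = Q n v j)
    (hLM : LMon 𝔊 (n + 1) Q) : LMon 𝔊 n Q := by
  intro v hv i j hij
  simpa only [hQ] using hLM v.extNull (hclosed v hv) _ _ hij.extNull

theorem costLM_mono_players_general {r : ℕ} [NeZero r] (𝔊 : GameClass)
    (hclosed : ∀ m, ∀ v ∈ 𝔊 m, v.extNull ∈ 𝔊 (m + 1))
    (P : Fin r → PowerIndex) (hP1 : ∀ m, LMon 𝔊 m (P 0))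
    (hinv : ∀ h, InvariantForNulls (P h)) (n : ℕ) :
    costLM P n 𝔊 ≤ costLM P (n + 1) 𝔊 := by
  refine csInf_le_csInf ⟨0, fun β hβ => hβ.1.1⟩ ?_ ?_
  · refine ⟨1, ⟨zero_le_one, le_rfl⟩, fun α hα h1 => ?_⟩
    rw [eq_single_of_mem_stdSimplex_of_one_le hα h1, convexComb_single]
    exact hP1 (n + 1)
  · rintro β ⟨hβ, hLM⟩
    exact ⟨hβ, fun α hα hle => (hLM α hα hle).of_extNull (hclosed n)
      fun v j => (InvariantForNulls.convexComb hinv α n v).2 j⟩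

/-- if all the power indices of `𝒫` are invariant for nulls and the
class `𝔊` of weighted games is closed under the addition of null players, then the
cost of local monotonicity is monotone in the number of players. -/
theorem costLM_mono_players {r : ℕ} [NeZero r] (𝔊 : GameClass)
    (h𝔊 : ∀ m, ∀ v ∈ 𝔊 m, v.IsWeighted)
    (hclosed : ∀ m, ∀ v ∈ 𝔊 m, v.extNull ∈ 𝔊 (m + 1))
    (P : Fin r → PowerIndex) (hP1 : ∀ m, LMon 𝔊 m (P 0))
    (hinv : ∀ h, InvariantForNulls (P h)) (n : ℕ) (hn : 0 < n) :
    costLM P n 𝔊 ≤ costLM P (n + 1) 𝔊 :=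
  costLM_mono_players_general 𝔊 hclosed P hP1 hinv n
end

section
/- For 𝒫 = (Bz^r, S^r) and all n ≥ 2, the cost of local monotonicity on the class 𝔚 of weighted games satisfies c_𝒫(n,𝔚) ≥ max(0, (n−3)/(n−1)). -/
open scoped Classical

/-!
In the weighted game `[2; 2, 1, …, 1]` the heavy player `z` dominates every other player `o`.
The coalitions decisive for `z` are `{z}` and the pairs `{z, k}`, and its only shift-minimal winning
coalition is `{z}`, so `Bz z ≤ n` and `S z ≤ 1`; the `n - 2` pairs `{o, k}` with `k ≠ z` are
decisive and shift-minimal for `o`, so `Bz o, S o ≥ n - 2`. Local monotonicity of `β Bz + (1 - β) S`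
at `z ⊒ o` thus forces `n - 2 ≤ β n + (1 - β)`, that is `β ≥ (n - 3) / (n - 1)`. The infimum
defining the cost is taken over a nonempty set, since `Bz` itself (`β = 1`) is locally monotone.
-/

open Finset

namespace SimpleGame

variable {n : ℕ}

theorem dominates_iff (v : SimpleGame n) (i j : Fin n) :
    v.Dominates i j ↔
      ∀ S, j ∈ S → i ∉ S → v.win S = true → v.win (insert i (S.erase j)) = true := by
  refine forall_congr' fun S => forall_congr' fun hj => forall_congr' fun hi => ?_
  have hij : i ≠ j := fun h => hi (h ▸ hj)
  rw [union_comm, ← insert_eq, ← erase_eq, erase_insert_of_ne hij]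
  cases v.win S <;> cases v.win (insert i (S.erase j)) <;> decide

theorem Dominates.bz_le {v : SimpleGame n} {i j : Fin n} (h : v.Dominates i j) :
    v.Bz j ≤ v.Bz i := by
  obtain rfl | hij := eq_or_ne i j
  · rfl
  have hwin := (v.dominates_iff i j).1 h
  -- `f` moves a coalition decisive for `j` to one decisive for `i`; `g` undoes it.
  let f : Finset (Fin n) → Finset (Fin n) := fun S => if i ∈ S then S else insert i (S.erase j)
  let g : Finset (Fin n) → Finset (Fin n) := fun T => if j ∈ T then T else insert j (T.erase i)
  have hgf : Set.LeftInvOn g f (v.Dset j) := by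
    intro S hS
    have hjS : j ∈ S := (mem_filter.1 hS).2.1
    by_cases hiS : i ∈ S
    · simp [f, g, hiS, hjS]
    · have hjf : j ∉ insert i (S.erase j) := by simp [hij.symm]
      simp only [f, g, if_neg hiS, if_neg hjf]
      rw [erase_insert fun h => hiS (mem_of_mem_erase h), insert_erase hjS]
  refine card_le_card_of_injOn f (fun S hS => ?_) hgf.injOn
  simp only [Dset, coe_filter, mem_univ, true_and] at hS ⊢
  obtain ⟨hjS, hS, hSj⟩ := hS
  by_cases hiS : i ∈ S
  · simp only [f, if_pos hiS]
    refine ⟨hiS, hS, Bool.eq_false_iff.2 fun hSi => ?_⟩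
    have := hwin (S.erase i) (mem_erase.2 ⟨hij.symm, hjS⟩) (notMem_erase i S) hSi
    rw [erase_right_comm, insert_erase (mem_erase.2 ⟨hij, hiS⟩), hSj] at this
    exact Bool.false_ne_true this
  · simp only [f, if_neg hiS]
    exact ⟨mem_insert_self _ _, hwin S hjS hiS hS,
      by rwa [erase_insert fun h => hiS (mem_of_mem_erase h)]⟩

end SimpleGame

theorem lMon_bzPI (𝔊 : GameClass) (n : ℕ) : LMon 𝔊 n BzPI :=
  fun _ _ _ _ h => Nat.cast_le.2 h.bz_le

theorem convexComb_eq_of_one_le {r : ℕ} [NeZero r] {α : Fin r → ℝ}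
    (hα : α ∈ stdSimplex ℝ (Fin r)) (h1 : 1 ≤ α 0) (P : Fin r → PowerIndex) :
    convexComb α P = P 0 := by
  have hsplit := add_sum_erase univ α (mem_univ 0)
  have hrest_nonneg : ∀ h ∈ univ.erase 0, 0 ≤ α h := fun h _ => hα.1 h
  have hrest : ∑ h ∈ univ.erase 0, α h = 0 :=
    le_antisymm (by linarith [hα.2]) (sum_nonneg hrest_nonneg)
  have hα0 : α 0 = 1 := by linarith [hα.2]
  have hzero : ∀ h ≠ 0, α h = 0 := fun h hh =>
    (sum_eq_zero_iff_of_nonneg hrest_nonneg).1 hrest h (mem_erase.2 ⟨hh, mem_univ h⟩)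
  funext n v i
  rw [convexComb, sum_eq_single 0 (fun h _ hh => by rw [hzero h hh, zero_mul]) (by simp),
    hα0, one_mul]

theorem le_costLM {r : ℕ} [NeZero r] {P : Fin r → PowerIndex} {n : ℕ} {𝔊 : GameClass}
    (hP : LMon 𝔊 n (P 0)) {c : ℝ}
    (hc : ∀ β ∈ Set.Icc (0 : ℝ) 1,
      (∀ α ∈ stdSimplex ℝ (Fin r), β ≤ α 0 → LMon 𝔊 n (convexComb α P)) → c ≤ β) :
    c ≤ costLM P n 𝔊 :=
  le_csInf ⟨1, ⟨zero_le_one, le_rfl⟩, fun _ hα h1 => convexComb_eq_of_one_le hα h1 P ▸ hP⟩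
    fun β hβ => hc β hβ.1 hβ.2

theorem pair_mem_stdSimplex {β : ℝ} (h0 : 0 ≤ β) (h1 : β ≤ 1) :
    ![β, 1 - β] ∈ stdSimplex ℝ (Fin 2) :=
  ⟨fun i => by fin_cases i <;> simp [h0, h1], by simp [Fin.sum_univ_two]⟩

@[simp]
theorem convexComb_pair (a b : ℝ) (P Q : PowerIndex) (n : ℕ) (v : SimpleGame n) (i : Fin n) :
    convexComb ![a, b] ![P, Q] n v i = a * P n v i + b * Q n v i := by
  simp [convexComb, Fin.sum_univ_two]

theorem card_le_card_add_two_of_pair_mem {α : Type*} [Fintype α] [DecidableEq α]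
    {F : Finset (Finset α)} {o z : α} (h : ∀ k, k ≠ z → k ≠ o → {o, k} ∈ F) :
    Fintype.card α ≤ #F + 2 := by
  have hinj : Set.InjOn (fun k => ({o, k} : Finset α)) ↑(univ \ {z, o}) := by
    intro k₁ hk₁ k₂ _ heq
    have hk₁o : k₁ ≠ o := by simp_all
    have heq : ({o, k₁} : Finset α) = {o, k₂} := heq
    have : k₁ ∈ ({o, k₂} : Finset α) := by
      rw [← heq]
      exact mem_insert_of_mem (mem_singleton_self k₁)
    simpa [hk₁o] using this
  have hmaps : Set.MapsTo (fun k => ({o, k} : Finset α)) ↑(univ \ {z, o}) ↑F := by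
    intro k hk
    simp only [coe_sdiff, coe_univ, Set.mem_sdiff, Set.mem_univ, coe_insert, coe_singleton,
      Set.mem_insert_iff, Set.mem_singleton_iff, not_or, true_and] at hk
    exact h k hk.1 hk.2
  calc Fintype.card α = #(univ \ {z, o}) + #{z, o} := by
        rw [card_sdiff_add_card, union_eq_left.2 (subset_univ _), card_univ]
    _ ≤ #F + 2 := add_le_add (card_le_card_of_injOn _ hmaps hinj) card_le_two

variable {n : ℕ}

/-- The weighted game `[2; 2, 1, …, 1]` in which `z` has weight `2`. -/
def heavyPlayerGame (z : Fin n) : SimpleGame n where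
  win S := decide (z ∈ S ∨ 2 ≤ #S)
  win_empty := by simp
  win_univ := by simp
  win_mono S T hST := by
    simpa using Or.imp (@hST z) fun h => h.trans (card_le_card hST)

namespace heavyPlayerGame

variable (z : Fin n)

@[simp]
theorem win_eq_true_iff (S : Finset (Fin n)) :
    (heavyPlayerGame z).win S = true ↔ z ∈ S ∨ 2 ≤ #S := by
  simp [heavyPlayerGame]

@[simp]
theorem win_eq_false_iff (S : Finset (Fin n)) :
    (heavyPlayerGame z).win S = false ↔ ¬(z ∈ S ∨ 2 ≤ #S) := by
  simp [heavyPlayerGame]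

theorem isWeighted : (heavyPlayerGame z).IsWeighted := by
  refine ⟨2, fun i => 1 + if i = z then 1 else 0, two_pos, fun i => by positivity, fun S => ?_⟩
  rw [win_eq_true_iff, sum_add_distrib, sum_const, nsmul_one, sum_ite_eq']
  by_cases hz : z ∈ S
  · have : (1 : ℝ) ≤ #S := by exact_mod_cast card_pos.2 ⟨z, hz⟩
    simp only [hz, true_or, if_true, true_iff]
    linarith
  · simp only [hz, false_or, if_false, add_zero]
    exact_mod_cast Iff.rfl

theorem dominates_heavy (j : Fin n) : (heavyPlayerGame z).Dominates z j :=
  (SimpleGame.dominates_iff _ _ _).2 fun _ _ _ _ => by simp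

theorem dominates_of_ne (j : Fin n) {i : Fin n} (hi : i ≠ z) :
    (heavyPlayerGame z).Dominates j i := by
  refine (SimpleGame.dominates_iff _ _ _).2 fun S hiS hjS hS => ?_
  rw [win_eq_true_iff] at hS ⊢
  refine hS.imp (fun hz => mem_insert_of_mem (mem_erase.2 ⟨hi.symm, hz⟩)) fun h2 => ?_
  rwa [card_insert_of_notMem fun h => hjS (mem_of_mem_erase h), card_erase_add_one hiS]

theorem bz_heavy_le : (heavyPlayerGame z).Bz z ≤ n := by
  -- `{z, z} = {z}`, so every coalition decisive for `z` is some `{z, k}`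
  have hsub : (heavyPlayerGame z).Dset z ⊆ univ.image fun k => {z, k} := by
    intro S hS
    obtain ⟨hzS, -, hrest⟩ : z ∈ S ∧ _ ∧ #(S.erase z) ≤ 1 := by
      simpa [SimpleGame.Dset] using hS
    have : Nonempty (Fin n) := ⟨z⟩
    obtain ⟨k, hk⟩ := card_le_one_iff_subset_singleton.1 hrest
    rw [mem_image]
    rcases subset_singleton_iff.1 hk with he | he
    · exact ⟨z, mem_univ z, by rw [← insert_erase hzS, he, pair_eq_singleton]; rfl⟩
    · exact ⟨k, mem_univ k, by rw [← insert_erase hzS, he]⟩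
  calc (heavyPlayerGame z).Bz z ≤ #(univ.image fun k => ({z, k} : Finset (Fin n))) :=
        card_le_card hsub
    _ ≤ n := card_image_le.trans (card_fin n).le

theorem shiftIdx_heavy_le : (heavyPlayerGame z).ShiftIdx z ≤ 1 := by
  refine card_le_one_iff_subset_singleton.2 ⟨{z}, fun S hS => mem_singleton.2 ?_⟩
  obtain ⟨⟨⟨-, hmin⟩, -⟩, hzS⟩ := by simpa [SimpleGame.Sset] using hS
  by_contra hne
  simpa using hmin {z} (Finset.ssubset_iff_subset_ne.2 ⟨singleton_subset_iff.2 hzS, Ne.symm hne⟩)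

variable {z}

theorem pair_mem_dset {o k : Fin n} (hkz : k ≠ z) (hko : k ≠ o) :
    {o, k} ∈ (heavyPlayerGame z).Dset o := by
  simp [SimpleGame.Dset, card_pair hko.symm, hko.symm, hkz.symm]

theorem pair_mem_sset {o k : Fin n} (hoz : o ≠ z) (hkz : k ≠ z) (hko : k ≠ o) :
    {o, k} ∈ (heavyPlayerGame z).Sset o := by
  refine mem_filter.2
    ⟨mem_univ _, ⟨⟨?_, fun T hT => ?_⟩, fun i hi j _ _ hji => ?_⟩, mem_insert_self _ _⟩
  · simp [card_pair hko.symm]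
  · have hzT : z ∉ T := fun h => by simpa [hoz.symm, hkz.symm] using hT.subset h
    have := card_lt_card hT
    rw [card_pair hko.symm] at this
    simp [hzT, this]
  · have hiz : i ≠ z := by rcases mem_insert.1 hi with rfl | hi <;> simp_all
    exact absurd (dominates_of_ne z j hiz) hji

theorem le_bz_add_two {o : Fin n} : n ≤ (heavyPlayerGame z).Bz o + 2 := by
  simpa [SimpleGame.Bz] using card_le_card_add_two_of_pair_mem fun k hkz hko =>
    pair_mem_dset (o := o) hkz hko

theorem le_shiftIdx_add_two {o : Fin n} (hoz : o ≠ z) :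
    n ≤ (heavyPlayerGame z).ShiftIdx o + 2 := by
  simpa [SimpleGame.ShiftIdx] using card_le_card_add_two_of_pair_mem fun k hkz hko =>
    pair_mem_sset hoz hkz hko

end heavyPlayerGame

/-- for `𝒫 = (Bz^r, S^r)` and `n ≥ 2`, the cost of local
monotonicity on weighted games is at least `max(0, (n-3)/(n-1))`. -/
theorem costLM_Bz_Shift_lower_bound (n : ℕ) (hn : 2 ≤ n) :
    max 0 (((n : ℝ) - 3) / ((n : ℝ) - 1)) ≤ costLM ![BzPI, ShiftPI] n WeightedClass := by
  let z : Fin n := ⟨0, by omega⟩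
  let o : Fin n := ⟨1, hn⟩
  have hoz : o ≠ z := by simp [o, z, Fin.ext_iff]
  let v := heavyPlayerGame z
  refine le_costLM (lMon_bzPI _ _) fun β ⟨hβ0, hβ1⟩ hLM => max_le hβ0 ?_
  have hlm := hLM ![β, 1 - β] (pair_mem_stdSimplex hβ0 hβ1) le_rfl v
    (heavyPlayerGame.isWeighted z) z o (heavyPlayerGame.dominates_heavy z o)
  simp only [convexComb_pair, BzPI, ShiftPI] at hlm
  have hBz : (v.Bz z : ℝ) ≤ n := by exact_mod_cast heavyPlayerGame.bz_heavy_le z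
  have hSz : (v.ShiftIdx z : ℝ) ≤ 1 := by exact_mod_cast heavyPlayerGame.shiftIdx_heavy_le z
  have hBo : (n : ℝ) ≤ v.Bz o + 2 := by exact_mod_cast heavyPlayerGame.le_bz_add_two
  have hSo : (n : ℝ) ≤ v.ShiftIdx o + 2 := by
    exact_mod_cast heavyPlayerGame.le_shiftIdx_add_two hoz
  have hn1 : (1 : ℝ) < n := by exact_mod_cast hn
  rw [div_le_iff₀ (by linarith)]
  linarith [mul_le_mul_of_nonneg_left hBz hβ0, mul_le_mul_of_nonneg_left hBo hβ0,
    mul_le_mul_of_nonneg_left hSz (sub_nonneg.2 hβ1),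
    mul_le_mul_of_nonneg_left hSo (sub_nonneg.2 hβ1)]
end
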